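/- DL extraction step (second case of the security analysis of the IHT-based DPDP scheme): let G be a commutative group, p a prime, and g ∈ G an element of order p. Let ξ ∈ ℤ and h = g^ξ, and let y_j, z_j, Δμ_j ∈ ℤ for j = 1, …, s with h_j = g^{y_j} · h^{z_j}. If ∏_{j=1}^s h_j^{Δμ_j} = 1 in G and p does not divide ∑_{j=1}^s z_j·Δμ_j, then the discrete logarithm of h with respect to g is determined modulo p: in ZMod p, (ξ mod p) = -((∑_{j=1}^s y_j·Δμ_j) mod p) · ((∑_{j=1}^s z_j·Δμ_j) mod p)⁻¹. -/

import Mathlib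

/-! Substituting `h = g ^ ξ` collapses the product to the single power
`g ^ (Y + ξ Z)` with `Y = ∑ y_j Δμ_j` and `Z = ∑ z_j Δμ_j`. Since `g` has order `p`,
`Y + ξ Z ≡ 0 (mod p)`, and `Z` is invertible in the field `ZMod p`. -/

theorem Finset.prod_zpow_eq_zpow_sum {ι G : Type*} [CommGroup G] (s : Finset ι) (f : ι → ℤ)
    (g : G) : ∏ i ∈ s, g ^ f i = g ^ ∑ i ∈ s, f i := by
  classical
  induction s using Finset.induction_on with
  | empty => simp
  | insert i s hi ih => rw [Finset.prod_insert hi, Finset.sum_insert hi, ih, zpow_add]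

theorem intCast_zmod_orderOf_eq_zero_iff {G : Type*} [Group G] (g : G) (n : ℤ) :
    (n : ZMod (orderOf g)) = 0 ↔ g ^ n = 1 := by
  rw [ZMod.intCast_zmod_eq_zero_iff_dvd, orderOf_dvd_iff_zpow_eq_one]

theorem prod_zpow_mul_zpow_zpow {ι G : Type*} [CommGroup G] (s : Finset ι) (g : G) (ξ : ℤ)
    (y z e : ι → ℤ) :
    ∏ j ∈ s, (g ^ y j * (g ^ ξ) ^ z j) ^ e j =
      g ^ (∑ j ∈ s, y j * e j + ξ * ∑ j ∈ s, z j * e j) := by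
  have factor (j : ι) : (g ^ y j * (g ^ ξ) ^ z j) ^ e j = g ^ (y j * e j + ξ * (z j * e j)) := by
    rw [← zpow_mul, ← zpow_add, ← zpow_mul]
    ring_nf
  rw [Finset.prod_congr rfl fun j _ => factor j, Finset.prod_zpow_eq_zpow_sum,
    Finset.sum_add_distrib, Finset.mul_sum]

/-- DL extraction step (second case of the security analysis of the IHT-based
DPDP scheme): the discrete logarithm `ξ` of `h = g^ξ` is determined modulo
`p`. -/
theorem iht_dl_extraction
    {G : Type*} [CommGroup G] (p : ℕ) (hp : p.Prime)
    (g : G) (hg : orderOf g = p)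
    (s : ℕ) (ξ : ℤ) (h : G) (hξ : h = g ^ ξ)
    (y z Δμ : Fin s → ℤ)
    (hs : Fin s → G) (hhs : ∀ j, hs j = g ^ (y j) * h ^ (z j))
    (hprod : ∏ j, (hs j) ^ (Δμ j) = 1)
    (hden : ¬ (p : ℤ) ∣ ∑ j, z j * Δμ j) :
    (ξ : ZMod p) =
      -((∑ j, y j * Δμ j : ℤ) : ZMod p) *
        ((∑ j, z j * Δμ j : ℤ) : ZMod p)⁻¹ := by
  have : Fact p.Prime := ⟨hp⟩
  have hrel : g ^ (∑ j, y j * Δμ j + ξ * ∑ j, z j * Δμ j) = 1 := by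
    simpa only [hhs, hξ, prod_zpow_mul_zpow_zpow] using hprod
  have hmod := (intCast_zmod_orderOf_eq_zero_iff g _).2 hrel
  rw [hg] at hmod
  have hZ : ((∑ j, z j * Δμ j : ℤ) : ZMod p) ≠ 0 :=
    mt (ZMod.intCast_zmod_eq_zero_iff_dvd _ p).1 hden
  push_cast at hmod hZ ⊢
  field_simp
  linear_combination hmod
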